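/- arXiv:2007.15590 — 5 statements merged into one kernel-verified Lean document; each statement's English description precedes it below -/
import Mathlib

section
/- Let M be a free ℤ-module of rank 3 equipped with a symmetric bilinear form B : M × M → ℤ that is positive definite (B(v,v) > 0 for all v ≠ 0). Suppose h, T ∈ M satisfy B(h,h) = 3, B(h,T) = 4, B(T,T) = 10, the submodule spanned by h and T is saturated in M (for every nonzero integer n and every m ∈ M, if n·m lies in the span of h and T then m lies in the span of h and T), and every v ∈ M with B(v,h) = 0 has B(v,v) even and B(v,v) ≠ 2. Then there exists J ∈ M such that (h, T, J) is a ℤ-basis of M, B(h,J) = 0, 0 ≤ B(T,J) ≤ 7, B(J,J) is even, B(J,J) > 2, and 14·B(J,J) > 3·B(T,J)². -/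
/-!
Saturation makes `M ⧸ span {h, T}` torsion-free of rank one, so `(h, T)` extends to a basis
`(h, T, J₀)`; replacing `J₀` by `± J₀ + x • h + y • T` keeps a basis. With `p = B h J₀`, the vector
`J₀ + p • h - p • T` is orthogonal to `h`, and adding multiples of `4 • h - 3 • T ⊥ h` shifts
`B T J` by multiples of `14`; a sign change brings it into `[0, 7]`. On `h⊥` the form is even and
misses `2`, so positivity gives `B J J > 2`, and `14 * B J J - 3 * (B T J) ^ 2` is the Gram
determinant of `(h, T, J)`, hence positive.
-/

open Module Submodule

lemma Int.exists_isUnit_mul_sub_mul_nonneg_two_mul_le (r : ℤ) {n : ℤ} (hn : 0 < n) :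
    ∃ ε t : ℤ, IsUnit ε ∧ 0 ≤ ε * r - n * t ∧ 2 * (ε * r - n * t) ≤ n := by
  have hdiv := Int.mul_ediv_add_emod r n
  have hlo := Int.emod_nonneg r hn.ne'
  have hhi := Int.emod_lt_of_pos r hn
  obtain hsmall | hlarge := le_or_gt (2 * (r % n)) n
  · exact ⟨1, r / n, isUnit_one, by linarith, by linarith⟩
  · exact ⟨-1, -(r / n) - 1, isUnit_one.neg, by linarith, by linarith⟩

section

variable {R M : Type*} [CommRing R] [AddCommGroup M] [Module R M]

lemma Submodule.isTorsionFree_quotient_of_saturated [IsDomain R] {N : Submodule R M}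
    (hN : ∀ n : R, n ≠ 0 → ∀ m : M, n • m ∈ N → m ∈ N) : IsTorsionFree R (M ⧸ N) := by
  refine .of_smul_eq_zero fun n q hq => ?_
  obtain ⟨m, rfl⟩ := N.mkQ_surjective q
  rw [← map_smul, mkQ_apply, Quotient.mk_eq_zero] at hq
  by_cases hn : n = 0
  · exact .inl hn
  · exact .inr ((Quotient.mk_eq_zero N).2 (hN n hn m hq))

lemma exists_top_le_span_triple_of_saturated [IsDomain R] [IsPrincipalIdealRing R]
    [Module.Finite R M] (hrk : finrank R M = 3) {h T : M} (hli : LinearIndependent R ![h, T])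
    (hsat : ∀ n : R, n ≠ 0 → ∀ m : M, n • m ∈ span R {h, T} → m ∈ span R {h, T}) :
    ∃ J : M, ⊤ ≤ span R (Set.range ![h, T, J]) := by
  set N := span R ({h, T} : Set M)
  have := isTorsionFree_quotient_of_saturated hsat
  have hN : finrank R N = 2 := by
    rw [← Fintype.card_fin 2, ← finrank_span_eq_card hli, Matrix.range_cons_cons_empty]
  have hQ : finrank R (M ⧸ N) ≤ 1 := by
    have := N.finrank_quotient_add_finrank
    omega
  obtain ⟨e, he⟩ := finrank_le_one_iff.1 hQ
  obtain ⟨J, rfl⟩ := N.mkQ_surjective e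
  refine ⟨J, fun m _ => ?_⟩
  obtain ⟨c, hc⟩ := he (N.mkQ m)
  have hmJ : m - c • J ∈ N := by
    rw [mkQ_apply, mkQ_apply] at hc
    rw [← Quotient.mk_eq_zero, Quotient.mk_sub, Quotient.mk_smul, hc, sub_self]
  obtain ⟨a, b, hab⟩ := mem_span_pair.1 hmJ
  refine (mem_span_range_iff_exists_fun R).2 ⟨![a, b, c], ?_⟩
  simp [Fin.sum_univ_three, hab]

lemma top_le_span_triple_isUnit_smul_add {a b c : M} (hspan : ⊤ ≤ span R (Set.range ![a, b, c]))
    {ε : R} (hε : IsUnit ε) (x y : R) :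
    ⊤ ≤ span R (Set.range ![a, b, ε • c + x • a + y • b]) := by
  set S := span R (Set.range ![a, b, ε • c + x • a + y • b])
  have ha : a ∈ S := subset_span ⟨0, rfl⟩
  have hb : b ∈ S := subset_span ⟨1, rfl⟩
  have hc' : ε • c + x • a + y • b ∈ S := subset_span ⟨2, rfl⟩
  refine hspan.trans (span_le.2 ?_)
  rintro _ ⟨i, rfl⟩
  fin_cases i
  · exact ha
  · exact hb
  · obtain ⟨u, rfl⟩ := hε
    have hc : (↑u⁻¹ : R) • ((u : R) • c + x • a + y • b - y • b - x • a) = c := by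
      rw [add_sub_cancel_right, add_sub_cancel_right, smul_smul, Units.inv_mul, one_smul]
    rw [← hc]
    exact S.smul_mem _ (S.sub_mem (S.sub_mem hc' (S.smul_mem _ hb)) (S.smul_mem _ ha))

lemma LinearMap.linearIndependent_pair_of_det_ne_zero [IsDomain R] (B : M →ₗ[R] M →ₗ[R] R)
    {x y : M} (hdet : B x x * B y y - B x y * B y x ≠ 0) : LinearIndependent R ![x, y] := by
  refine LinearIndependent.pair_iff.2 fun s t hst => ?_
  have hx : s * B x x + t * B x y = 0 := by simpa using congr(B x $hst)
  have hy : s * B y x + t * B y y = 0 := by simpa using congr(B y $hst)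
  have hs : s * (B x x * B y y - B x y * B y x) = 0 := by
    linear_combination B y y * hx - B x y * hy
  have ht : t * (B x x * B y y - B x y * B y x) = 0 := by
    linear_combination B x x * hy - B y x * hx
  exact ⟨(mul_eq_zero.1 hs).resolve_right hdet, (mul_eq_zero.1 ht).resolve_right hdet⟩

end

section

variable {M : Type*} [AddCommGroup M] (B : M →ₗ[ℤ] M →ₗ[ℤ] ℤ) {h T : M}

lemma exists_reduced_top_le_span_triple (hhh : B h h = 3) (hhT : B h T = 4)
    (hTh : B T h = 4) (hTT : B T T = 10) {J₀ : M} (hJ₀ : ⊤ ≤ span ℤ (Set.range ![h, T, J₀])) :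
    ∃ J, ⊤ ≤ span ℤ (Set.range ![h, T, J]) ∧ B h J = 0 ∧ 0 ≤ B T J ∧ B T J ≤ 7 := by
  set p := B h J₀
  set q := B T J₀
  obtain ⟨ε, t, hε, hlo, hhi⟩ :=
    Int.exists_isUnit_mul_sub_mul_nonneg_two_mul_le (q - 6 * p) (by norm_num : (0 : ℤ) < 14)
  refine ⟨ε • J₀ + (ε * p + 4 * t) • h + (-(ε * p) - 3 * t) • T,
    top_le_span_triple_isUnit_smul_add hJ₀ hε _ _, ?_, ?_⟩
  · simp only [map_add, map_smul, smul_eq_mul, hhh, hhT]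
    ring
  · have hTJ : B T (ε • J₀ + (ε * p + 4 * t) • h + (-(ε * p) - 3 * t) • T) =
        ε * (q - 6 * p) - 14 * t := by
      simp only [map_add, map_smul, smul_eq_mul, hTh, hTT]
      ring
    omega

lemma three_mul_sq_lt_fourteen_mul (hsymm : ∀ v w : M, B v w = B w v)
    (hpos : ∀ v : M, v ≠ 0 → 0 < B v v) (hhh : B h h = 3) (hhT : B h T = 4) (hTT : B T T = 10)
    {J : M} (hli : LinearIndependent ℤ ![h, T, J]) (hhJ : B h J = 0) :
    3 * B T J ^ 2 < 14 * B J J := by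
  set q := B T J
  -- This vector is orthogonal to `h` and `T`, so its square is `14` times its product with `J`.
  have hw : (4 * q) • h + (-(3 * q)) • T + (14 : ℤ) • J ≠ 0 := fun hw0 => by
    simpa using Fintype.linearIndependent_iff.1 hli ![4 * q, -(3 * q), 14]
      (by simpa [Fin.sum_univ_three] using hw0) 2
  have hBww : 0 < 14 * (14 * B J J - 3 * q ^ 2) := by
    convert hpos _ hw using 1
    simp only [map_add, map_smul, LinearMap.add_apply, LinearMap.smul_apply, smul_eq_mul,
      hsymm T h, hsymm J h, hsymm J T, hhh, hhT, hTT, hhJ]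
    ring
  linarith

end

/-- Normal form for a rank 3 positive definite lattice containing a primitively
embedded sublattice `K₁₄` with Gram matrix `(3,4;4,10)` with respect to `(h,T)`,
under the root and parity conditions of a smooth cubic fourfold. -/
theorem stmt0 (M : Type*) [AddCommGroup M] [Module ℤ M] [Module.Free ℤ M]
    (hrk : Module.finrank ℤ M = 3)
    (B : M →ₗ[ℤ] M →ₗ[ℤ] ℤ)
    (hsymm : ∀ v w : M, B v w = B w v)
    (hpos : ∀ v : M, v ≠ 0 → 0 < B v v)
    (h T : M)
    (hhh : B h h = 3) (hhT : B h T = 4) (hTT : B T T = 10)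
    (hsat : ∀ n : ℤ, n ≠ 0 → ∀ m : M,
      n • m ∈ Submodule.span ℤ ({h, T} : Set M) →
      m ∈ Submodule.span ℤ ({h, T} : Set M))
    (heven : ∀ v : M, B v h = 0 → Even (B v v) ∧ B v v ≠ 2) :
    ∃ J : M, (∃ bas : Module.Basis (Fin 3) ℤ M, bas 0 = h ∧ bas 1 = T ∧ bas 2 = J) ∧
      B h J = 0 ∧ 0 ≤ B T J ∧ B T J ≤ 7 ∧ Even (B J J) ∧ 2 < B J J ∧
      3 * (B T J) ^ 2 < 14 * B J J := by
  -- In the statement `n • m` is `zsmul`, whereas `span ℤ` and `B` use the given module structure.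
  obtain rfl : ‹Module ℤ M› = AddCommGroup.toIntModule M := Subsingleton.elim _ _
  have : Module.Finite ℤ M := Module.finite_of_finrank_pos (by omega)
  have hTh : B T h = 4 := by rw [hsymm, hhT]
  have hcard : Fintype.card (Fin 3) = finrank ℤ M := by rw [hrk, Fintype.card_fin]
  have hli₂ : LinearIndependent ℤ ![h, T] :=
    B.linearIndependent_pair_of_det_ne_zero (by rw [hhh, hhT, hTh, hTT]; norm_num)
  obtain ⟨J₀, hJ₀⟩ := exists_top_le_span_triple_of_saturated hrk hli₂ hsat
  obtain ⟨J, hspan, hhJ, hTJ₀, hTJ₇⟩ :=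
    exists_reduced_top_le_span_triple B hhh hhT hTh hTT hJ₀
  have hli := linearIndependent_of_top_le_span_of_card_eq_finrank hspan hcard
  obtain ⟨⟨k, hk⟩, hJJ₂⟩ := heven J (by rw [hsymm, hhJ])
  have hJJ : 0 < B J J := hpos J (by simpa using hli.ne_zero 2)
  refine ⟨J, ⟨basisOfTopLeSpanOfCardEqFinrank _ hspan hcard, by simp, by simp, by simp⟩,
    hhJ, hTJ₀, hTJ₇, ⟨k, hk⟩, by omega,
    three_mul_sq_lt_fourteen_mul B hsymm hpos hhh hhT hTT hli hhJ⟩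
end

section
/- Let b and c be integers, let G be the symmetric 3×3 integer matrix with rows (3,4,0), (4,10,b), (0,b,c), let g = gcd(b,14), and let w = (4b/g, −3b/g, 14/g) ∈ ℤ³. Then the set of vectors v ∈ ℤ³ with ⟨v,e₀⟩_G = 0 and ⟨v,e₁⟩_G = 0 is exactly the set of integer multiples of w, and ⟨w,w⟩_G = 14(14c − 3b²)/g². -/
/-!
Write `g = gcd(b, 14)`, `b = g b'`, `14 = g f` with `b'`, `f` coprime. Orthogonality to `e₀`
reads `3 v₀ + 4 v₁ = 0`, so `(v₀, v₁) = m (4, -3)`; orthogonality to `e₁` then reads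
`b v₂ = 14 m`, i.e. `b' v₂ = f m`, so `(m, v₂) = k (b', f)` by coprimality.
-/

open Matrix

theorem IsCoprime.mul_eq_mul_iff_exists {p q x y : ℤ} (h : IsCoprime p q) (hp : p ≠ 0) :
    p * x = q * y ↔ ∃ k, x = q * k ∧ y = p * k := by
  constructor
  · intro hxy
    obtain ⟨k, rfl⟩ := h.dvd_of_dvd_mul_left ⟨x, hxy.symm⟩
    refine ⟨k, mul_left_cancel₀ hp ?_, rfl⟩
    linear_combination hxy
  · rintro ⟨k, rfl, rfl⟩
    ring

section Gram

variable (b c : ℤ) (v : Fin 3 → ℤ)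

theorem dotProduct_gram_mulVec_e₀ :
    v ⬝ᵥ !![3, 4, 0; 4, 10, b; 0, b, c] *ᵥ ![1, 0, 0] = 3 * v 0 + 4 * v 1 := by
  simp [mulVec, dotProduct, Fin.sum_univ_three, mul_comm]

theorem dotProduct_gram_mulVec_e₁ :
    v ⬝ᵥ !![3, 4, 0; 4, 10, b; 0, b, c] *ᵥ ![0, 1, 0] = 4 * v 0 + 10 * v 1 + b * v 2 := by
  simp [mulVec, dotProduct, Fin.sum_univ_three, mul_comm]

variable {b' f : ℤ}

theorem orthogonal_e₀_e₁_iff (hf : f ≠ 0) (hcop : IsCoprime f b') (hbf : b * f = 14 * b') :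
    (v ⬝ᵥ !![3, 4, 0; 4, 10, b; 0, b, c] *ᵥ ![1, 0, 0] = 0 ∧
      v ⬝ᵥ !![3, 4, 0; 4, 10, b; 0, b, c] *ᵥ ![0, 1, 0] = 0) ↔
      ∃ k : ℤ, v = k • ![4 * b', -(3 * b'), f] := by
  rw [dotProduct_gram_mulVec_e₀, dotProduct_gram_mulVec_e₁]
  constructor
  · rintro ⟨h₀, h₁⟩
    obtain ⟨m, hv₀, hv₁⟩ := (show IsCoprime (3 : ℤ) 4 by norm_num).mul_eq_mul_iff_exists
      (by norm_num) |>.1 (show 3 * v 0 = 4 * -v 1 by linarith)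
    have hm : f * m = b' * v 2 :=
      mul_left_cancel₀ (by norm_num : (14 : ℤ) ≠ 0) <| by
        linear_combination -f * h₁ + 4 * f * hv₀ - 10 * f * hv₁ + v 2 * hbf
    obtain ⟨k, rfl, hv₂⟩ := (hcop.mul_eq_mul_iff_exists hf).1 hm
    refine ⟨k, funext fun i => ?_⟩
    fin_cases i <;> simp only [Fin.zero_eta, Fin.mk_one, Fin.reduceFinMk, Pi.smul_apply, smul_eq_mul,
      cons_val_zero, cons_val_one, cons_val] <;> linarith
  · rintro ⟨k, rfl⟩
    simp only [Pi.smul_apply, cons_val, smul_eq_mul]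
    exact ⟨by ring, by linear_combination k * hbf⟩

theorem dotProduct_gram_mulVec_self (hbf : b * f = 14 * b') :
    ![4 * b', -(3 * b'), f] ⬝ᵥ !![3, 4, 0; 4, 10, b; 0, b, c] *ᵥ ![4 * b', -(3 * b'), f] =
      c * f ^ 2 - 42 * b' ^ 2 := by
  simp only [dotProduct, mulVec, of_apply, cons_val', cons_val_fin_one, Fin.sum_univ_three,
    cons_val_zero, cons_val_one, cons_val]
  linear_combination (-6 * b') * hbf

end Gram

/-- The orthogonal complement of the sublattice spanned by `e₀, e₁` in the rank 3
lattice with Gram matrix `(3,4,0;4,10,b;0,b,c)` is generated by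
`w = (4b/g, −3b/g, 14/g)` with `g = gcd(b,14)`, and `⟨w,w⟩ = 14(14c − 3b²)/g²`. -/
theorem stmt6 (b c : ℤ) :
    let G : Matrix (Fin 3) (Fin 3) ℤ := !![3, 4, 0; 4, 10, b; 0, b, c]
    let g : ℤ := Int.gcd b 14
    let w : Fin 3 → ℤ := ![4 * b / g, -(3 * b) / g, 14 / g]
    (∀ v : Fin 3 → ℤ,
      (v ⬝ᵥ G.mulVec ![1, 0, 0] = 0 ∧ v ⬝ᵥ G.mulVec ![0, 1, 0] = 0) ↔
        ∃ k : ℤ, v = k • w) ∧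
    w ⬝ᵥ G.mulVec w = 14 * (14 * c - 3 * b ^ 2) / g ^ 2 := by
  intro G g w
  have hgb : g ∣ b := Int.gcd_dvd_left b 14
  have hb : g * (b / g) = b := Int.mul_ediv_cancel' hgb
  have h14 : g * (14 / g) = 14 := Int.mul_ediv_cancel' (Int.gcd_dvd_right b 14)
  have hw : w = ![4 * (b / g), -(3 * (b / g)), 14 / g] := by
    simp only [w, Int.mul_ediv_assoc _ hgb, Int.neg_ediv_of_dvd (dvd_mul_of_dvd_right hgb 3)]
  have hcop : IsCoprime (14 / g) (b / g) :=
    (Int.coe_gcd b 14 ▸ isCoprime_div_gcd_div_gcd (by norm_num)).symm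
  have hf : 14 / g ≠ 0 := fun h => by simp [h] at h14
  have hbf : b * (14 / g) = 14 * (b / g) := by
    linear_combination (b / g) * h14 - (14 / g) * hb
  refine ⟨fun v => hw ▸ orthogonal_e₀_e₁_iff b c v hf hcop hbf, ?_⟩
  rw [hw, dotProduct_gram_mulVec_self b c hbf]
  have hg : g ≠ 0 := fun h => by simp [h] at h14
  refine (Int.ediv_eq_of_eq_mul_left (pow_ne_zero 2 hg) ?_).symm
  linear_combination (-c * (g * (14 / g) + 14)) * h14 + 42 * (b + g * (b / g)) * hb
end

section
/- There exists a 3×3 integer matrix U with determinant 1 or −1, whose first column is (1,0,0) and whose second column is (0,1,0), such that Uᵀ·A·U equals the symmetric matrix with rows (3,4,0), (4,10,7), (0,7,12), where A is the symmetric matrix with rows (3,4,1), (4,10,−1), (1,−1,3). -/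
open Matrix

/-- The lattice `Π` with Gram matrix `(3,4,1;4,10,−1;1,−1,3)` has normal form
`(3,4,0;4,10,7;0,7,12)` with respect to its fixed discriminant 14 marking. -/
theorem stmt11 :
    ∃ U : Matrix (Fin 3) (Fin 3) ℤ, (U.det = 1 ∨ U.det = -1) ∧
      U 0 0 = 1 ∧ U 1 0 = 0 ∧ U 2 0 = 0 ∧
      U 0 1 = 0 ∧ U 1 1 = 1 ∧ U 2 1 = 0 ∧
      Uᵀ * !![3, 4, 1; 4, 10, -1; 1, -1, 3] * U = !![3, 4, 0; 4, 10, 7; 0, 7, 12] := by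
  refine ⟨!![1, 0, -3; 0, 1, 2; 0, 0, 1], ?_, by decide, by decide, by decide,
    by decide, by decide, by decide, ?_⟩
  · left; decide
  · ext i j; fin_cases i <;> fin_cases j <;>
      simp [Matrix.mul_apply, Fin.sum_univ_succ]
end

section
/- Let G be the symmetric 4×4 integer matrix with rows (3,4,1,1), (4,10,0,0), (1,0,3,0), (1,0,0,3), and let e₀ = (1,0,0,0). Then G is positive definite (⟨v,v⟩_G > 0 for every nonzero v ∈ ℤ⁴), the lattice (ℤ⁴, G) has no short root (no v ∈ ℤ⁴ with ⟨v,v⟩_G = 2 and ⟨v,e₀⟩_G = 0), and it has no long root (no v ∈ ℤ⁴ with ⟨v,v⟩_G = 6, ⟨v,e₀⟩_G = 0, and all coordinates of v − e₀ or all coordinates of v + e₀ divisible by 3). -/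
open Matrix

/-!
Write `Q` for the norm form of `G`, `x = ⟨v, e₀⟩_G = 3a + 4b + c + d` and `y = 7b - 2c - 2d` for
`v = (a, b, c, d)`. Completing squares gives `21 Q = 7 x² + 2 y² + 3 R(c, d)` with
`R(c, d) = 16c² - 10cd + 16d²`, and `R` takes no nonzero value below `16`. Positive definiteness
follows at once. A short root would give `2 y² + 3 R = 42`, forcing `c = d = 0` and `7 b² = 3`.
For a long root, `b`, `c`, `d` are divisible by `3`, and dividing `2 y² + 3 R = 126` by `9` leaves
`2 y'² + 3 R' = 14`, forcing `7 b'² = 1`.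
-/

def cubicGram : Matrix (Fin 4) (Fin 4) ℤ := !![3, 4, 1, 1; 4, 10, 0, 0; 1, 0, 3, 0; 1, 0, 0, 3]

def e₀ : Fin 4 → ℤ := ![1, 0, 0, 0]

def residualForm (c d : ℤ) : ℤ := 16 * c ^ 2 - 10 * c * d + 16 * d ^ 2

lemma residualForm_three_mul (c d : ℤ) :
    residualForm (3 * c) (3 * d) = 9 * residualForm c d := by
  unfold residualForm
  ring

lemma sixteen_le_residualForm {c d : ℤ} (h : c ≠ 0 ∨ d ≠ 0) : 16 ≤ residualForm c d := by
  unfold residualForm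
  by_cases hc : c = 0
  · have hd : 1 ≤ d ^ 2 := pow_two_pos_of_ne_zero (h.resolve_left (not_not.2 hc))
    subst hc
    linarith
  by_cases hd : d = 0
  · have hc : 1 ≤ c ^ 2 := pow_two_pos_of_ne_zero hc
    subst hd
    linarith
  have hc : 1 ≤ c ^ 2 := pow_two_pos_of_ne_zero hc
  have hd : 1 ≤ d ^ 2 := pow_two_pos_of_ne_zero hd
  nlinarith [sq_nonneg (c - d)]

lemma eq_zero_of_two_sq_add_three_residualForm_lt {y c d m : ℤ}
    (h : 2 * y ^ 2 + 3 * residualForm c d = m) (hm : m < 48) : c = 0 ∧ d = 0 := by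
  by_contra hcd
  have := sixteen_le_residualForm (not_and_or.1 hcd)
  nlinarith [sq_nonneg y]

lemma cubicGram_norm (v : Fin 4 → ℤ) : v ⬝ᵥ cubicGram *ᵥ v =
    3 * v 0 ^ 2 + 8 * v 0 * v 1 + 2 * v 0 * v 2 + 2 * v 0 * v 3 + 10 * v 1 ^ 2
      + 3 * v 2 ^ 2 + 3 * v 3 ^ 2 := by
  simp [cubicGram, dotProduct, mulVec, Fin.sum_univ_four]
  ring

lemma cubicGram_pair_e₀ (v : Fin 4 → ℤ) :
    v ⬝ᵥ cubicGram *ᵥ e₀ = 3 * v 0 + 4 * v 1 + v 2 + v 3 := by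
  simp [cubicGram, e₀, dotProduct, mulVec, Fin.sum_univ_four]
  ring

lemma two_sq_add_three_residualForm_eq (v : Fin 4 → ℤ) :
    2 * (7 * v 1 - 2 * v 2 - 2 * v 3) ^ 2 + 3 * residualForm (v 2) (v 3)
      = 21 * (v ⬝ᵥ cubicGram *ᵥ v) - 7 * (v ⬝ᵥ cubicGram *ᵥ e₀) ^ 2 := by
  rw [cubicGram_norm, cubicGram_pair_e₀, residualForm]
  ring

lemma cubicGram_norm_pos {v : Fin 4 → ℤ} (hv : v ≠ 0) : 0 < v ⬝ᵥ cubicGram *ᵥ v := by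
  by_contra! hle
  have key := two_sq_add_three_residualForm_eq v
  obtain ⟨hc, hd⟩ := eq_zero_of_two_sq_add_three_residualForm_lt key (by nlinarith)
  rw [hc, hd, residualForm, cubicGram_pair_e₀] at key
  have hb : v 1 = 0 := by nlinarith [sq_nonneg (3 * v 0 + 4 * v 1 + v 2 + v 3)]
  have ha : v 0 = 0 := by
    rw [hb, hc, hd] at key
    nlinarith
  exact hv (funext fun i => by fin_cases i <;> assumption)

lemma not_exists_cubicGram_short_root :
    ¬ ∃ v : Fin 4 → ℤ, v ⬝ᵥ cubicGram *ᵥ v = 2 ∧ v ⬝ᵥ cubicGram *ᵥ e₀ = 0 := by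
  rintro ⟨v, hnorm, horth⟩
  have key := two_sq_add_three_residualForm_eq v
  rw [hnorm, horth] at key
  obtain ⟨hc, hd⟩ := eq_zero_of_two_sq_add_three_residualForm_lt key (by norm_num)
  rw [hc, hd, residualForm] at key
  have : 7 * v 1 ^ 2 = 3 := by linarith
  omega

lemma three_dvd_of_congr_e₀ {v : Fin 4 → ℤ}
    (h : (∀ i, (3 : ℤ) ∣ (v - e₀) i) ∨ (∀ i, (3 : ℤ) ∣ (v + e₀) i)) :
    3 ∣ v 1 ∧ 3 ∣ v 2 ∧ 3 ∣ v 3 := by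
  rcases h with h | h <;>
    exact ⟨by simpa [e₀] using h 1, by simpa [e₀] using h 2, by simpa [e₀] using h 3⟩

lemma not_exists_cubicGram_long_root :
    ¬ ∃ v : Fin 4 → ℤ, v ⬝ᵥ cubicGram *ᵥ v = 6 ∧ v ⬝ᵥ cubicGram *ᵥ e₀ = 0 ∧
      ((∀ i, (3 : ℤ) ∣ (v - e₀) i) ∨ (∀ i, (3 : ℤ) ∣ (v + e₀) i)) := by
  rintro ⟨v, hnorm, horth, hcongr⟩
  obtain ⟨⟨b, hb⟩, ⟨c, hc⟩, ⟨d, hd⟩⟩ := three_dvd_of_congr_e₀ hcongr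
  have key := two_sq_add_three_residualForm_eq v
  rw [hnorm, horth, hb, hc, hd, residualForm_three_mul] at key
  have reduced : 2 * (7 * b - 2 * c - 2 * d) ^ 2 + 3 * residualForm c d = 14 := by linarith
  obtain ⟨rfl, rfl⟩ := eq_zero_of_two_sq_add_three_residualForm_lt reduced (by norm_num)
  rw [residualForm] at reduced
  have : 7 * b ^ 2 = 1 := by linarith
  omega

/-- The rank 4 lattice with Gram matrix `(3,4,1,1;4,10,0,0;1,0,3,0;1,0,0,3)` is
positive definite and has neither short roots (norm 2 vectors orthogonal to `e₀`)
nor long roots (norm 6 vectors `v` orthogonal to `e₀` with `v − e₀` or `v + e₀`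
divisible by 3). -/
theorem stmt16 :
    let G : Matrix (Fin 4) (Fin 4) ℤ := !![3, 4, 1, 1; 4, 10, 0, 0; 1, 0, 3, 0; 1, 0, 0, 3]
    let e₀ : Fin 4 → ℤ := ![1, 0, 0, 0]
    (∀ v : Fin 4 → ℤ, v ≠ 0 → 0 < v ⬝ᵥ G.mulVec v) ∧
    (¬ ∃ v : Fin 4 → ℤ, v ⬝ᵥ G.mulVec v = 2 ∧ v ⬝ᵥ G.mulVec e₀ = 0) ∧
    (¬ ∃ v : Fin 4 → ℤ, v ⬝ᵥ G.mulVec v = 6 ∧ v ⬝ᵥ G.mulVec e₀ = 0 ∧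
      ((∀ i : Fin 4, (3 : ℤ) ∣ (v - e₀) i) ∨ (∀ i : Fin 4, (3 : ℤ) ∣ (v + e₀) i))) :=
  ⟨fun _ hv => cubicGram_norm_pos hv, not_exists_cubicGram_short_root,
    not_exists_cubicGram_long_root⟩
end

section
/- Let b and c be integers with c even, and let (α, β) be the unique pair of integers with 0 ≤ α ≤ 7 and α² − 14β = 14c − 3b². Then gcd(α,14) = gcd(b,14), and 14(14β − α²)/gcd(α,14)² = −14(14c − 3b²)/gcd(b,14)². -/
/-!
From `α² − 14β = 14c − 3b²` we get `14 ∣ α² + 3b²`. Modulo 2 this says `α ≡ b`, and modulo 7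
it says `α² ≡ 4b²`, i.e. `α ≡ ±2b`; either way `2` and `7` divide `α` exactly when they divide
`b`, so `gcd(α,14) = gcd(b,14)`. The second claim is then the same identity of numerators
divided by the same square.
-/

lemma ZMod.gcd_val_fourteen_eq_of_sq_add_three_mul_sq_eq_zero :
    ∀ x y : ZMod 14, x ^ 2 + 3 * y ^ 2 = 0 → Nat.gcd x.val 14 = Nat.gcd y.val 14 := by
  decide

lemma Int.gcd_fourteen_eq_of_dvd_sq_add_three_mul_sq {a b : ℤ} (h : 14 ∣ a ^ 2 + 3 * b ^ 2) :
    Int.gcd a 14 = Int.gcd b 14 := by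
  have gcd_eq_val (x : ℤ) : Int.gcd x 14 = Nat.gcd (x : ZMod 14).val 14 := by
    rw [← Int.gcd_natCast_natCast, ZMod.val_intCast, Int.gcd_emod]
    rfl
  rw [gcd_eq_val, gcd_eq_val]
  apply ZMod.gcd_val_fourteen_eq_of_sq_add_three_mul_sq_eq_zero
  exact_mod_cast (ZMod.intCast_zmod_eq_zero_iff_dvd _ 14).mpr h

theorem stmt17_general (b c : ℤ) (α β : ℤ)
    (hd : α ^ 2 - 14 * β = 14 * c - 3 * b ^ 2) :
    Int.gcd α 14 = Int.gcd b 14 ∧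
    14 * (14 * β - α ^ 2) / (Int.gcd α 14 : ℤ) ^ 2 =
      -(14 * (14 * c - 3 * b ^ 2)) / (Int.gcd b 14 : ℤ) ^ 2 := by
  have hg : Int.gcd α 14 = Int.gcd b 14 :=
    Int.gcd_fourteen_eq_of_dvd_sq_add_three_mul_sq ⟨β + c, by linarith⟩
  refine ⟨hg, ?_⟩
  rw [hg, show 14 * (14 * β - α ^ 2) = -(14 * (14 * c - 3 * b ^ 2)) by linarith]

/-- For the unique normalized pair `(α,β)` with `0 ≤ α ≤ 7` and
`α² − 14β = 14c − 3b²`, one has `gcd(α,14) = gcd(b,14)` and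
`14(14β − α²)/gcd(α,14)² = −14(14c − 3b²)/gcd(b,14)²`. -/
theorem stmt17 (b c : ℤ) (hc : Even c) (α β : ℤ) (h0 : 0 ≤ α) (h7 : α ≤ 7)
    (hd : α ^ 2 - 14 * β = 14 * c - 3 * b ^ 2) :
    Int.gcd α 14 = Int.gcd b 14 ∧
    14 * (14 * β - α ^ 2) / (Int.gcd α 14 : ℤ) ^ 2 =
      -(14 * (14 * c - 3 * b ^ 2)) / (Int.gcd b 14 : ℤ) ^ 2 :=
  stmt17_general b c α β hd
end
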